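/- Let k ≥ 2 be an integer, ω = √(4k²−1), and f₁ : ℝ × ℝ → ℂ³ defined by f₁(u,v) = ( √((2k²−1)/(4k²−1))·exp(i·2kv/ω), (k/ω)·exp(i·(u − v/ω)), (k/ω)·exp(i·(u + v/ω)) ). For each (u,v), let f_u(u,v) = ∂f₁/∂u and f_v(u,v) = ∂f₁/∂v denote the partial derivatives (derivatives of t ↦ f₁(t,v) at u and of t ↦ f₁(u,t) at v), and f_uu, f_vv the corresponding second partial derivatives. Then for all (u,v): (i) ‖f_u(u,v)‖² = ‖f_v(u,v)‖² = 2k²/(4k²−1); (ii) Re⟨f_u(u,v), f_v(u,v)⟩ = 0 (real part of the Hermitian inner product on ℂ³); and (iii) f_uu(u,v) + f_vv(u,v) = −(4k²/(4k²−1))·f₁(u,v). Hence the induced metric is flat (a constant multiple 2k²/(4k²−1) of the Euclidean metric) and, by Takahashi's theorem, f₁ is a minimal immersion into S⁵. -/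

import Mathlib

open Real Complex

open scoped ComplexConjugate InnerProductSpace ENNReal

/-!
Each coordinate of `f₁` is a plane wave `c_j e^{i(a_j u + b_j v)}`, with frequencies
`(a_j, b_j) = (0, 2k/ω), (1, -1/ω), (1, 1/ω)`. Differentiating in `u` (resp. `v`) multiplies the
`j`-th coordinate by `i a_j` (resp. `i b_j`), and `|e^{iθ}| = 1`, so the induced metric has the
constant coefficients `∑ a_j² |c_j|²`, `∑ a_j b_j |c_j|²`, `∑ b_j² |c_j|²`, while
`f_uu + f_vv = -μ f` as soon as every frequency has the same squared length `μ`; here all three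
have squared length `4k²/ω²`.
-/

lemma hasDerivAt_const_mul_cexp_I_mul {φ : ℝ → ℝ} {φ' t : ℝ} (c : ℂ) (hφ : HasDerivAt φ φ' t) :
    HasDerivAt (fun s => c * exp (I * φ s)) (I * φ' * c * exp (I * φ t)) t := by
  refine (((hφ.ofReal_comp.const_mul I).cexp).const_mul c).congr_deriv ?_
  ring

lemma hasDerivAt_toLp {𝕜 ι : Type*} [NontriviallyNormedField 𝕜] [Fintype ι] {E : ι → Type*}
    [∀ j, NormedAddCommGroup (E j)] [∀ j, NormedSpace 𝕜 (E j)] (p : ℝ≥0∞) [Fact (1 ≤ p)]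
    {g : 𝕜 → ∀ j, E j} {g' : ∀ j, E j} {t : 𝕜} (h : ∀ j, HasDerivAt (fun s => g s j) (g' j) t) :
    HasDerivAt (fun s => WithLp.toLp p (g s)) (WithLp.toLp p g') t :=
  (PiLp.hasFDerivAt_toLp p (g t)).comp_hasDerivAt t (hasDerivAt_pi.2 h)

section expTorus

variable {ι : Type*} [Fintype ι]

noncomputable def expTorus (c : ι → ℂ) (a b : ι → ℝ) (p : ℝ × ℝ) : EuclideanSpace ℂ ι :=
  WithLp.toLp 2 fun j => c j * exp (I * (a j * p.1 + b j * p.2 : ℝ))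

variable (c : ι → ℂ) (a b : ι → ℝ) (u v : ℝ)

lemma deriv_expTorus_fst :
    deriv (fun t => expTorus c a b (t, v)) = fun t => expTorus (fun j => I * a j * c j) a b (t, v) :=
  funext fun _ => (hasDerivAt_toLp 2 fun j => hasDerivAt_const_mul_cexp_I_mul (c j)
    ((hasDerivAt_const_mul (a j)).add_const (b j * v))).deriv

lemma deriv_expTorus_snd :
    deriv (fun t => expTorus c a b (u, t)) = fun t => expTorus (fun j => I * b j * c j) a b (u, t) :=
  funext fun _ => (hasDerivAt_toLp 2 fun j => hasDerivAt_const_mul_cexp_I_mul (c j)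
    ((hasDerivAt_const_mul (b j)).const_add (a j * u))).deriv

lemma norm_sq_expTorus (p : ℝ × ℝ) : ‖expTorus c a b p‖ ^ 2 = ∑ j, ‖c j‖ ^ 2 := by
  simp only [expTorus, EuclideanSpace.norm_sq_eq, norm_mul, norm_exp_I_mul_ofReal, mul_one]

lemma inner_expTorus (c' : ι → ℂ) (p : ℝ × ℝ) :
    ⟪expTorus c a b p, expTorus c' a b p⟫_ℂ = ∑ j, conj (c j) * c' j := by
  simp only [expTorus, PiLp.inner_apply, RCLike.inner_apply]
  refine Finset.sum_congr rfl fun j _ => ?_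
  rw [map_mul, mul_mul_mul_comm, mul_conj', norm_exp_I_mul_ofReal, ofReal_one, one_pow, mul_one,
    mul_comm]

lemma laplacian_expTorus {μ : ℝ} (hμ : ∀ j, a j ^ 2 + b j ^ 2 = μ) :
    deriv (deriv fun t => expTorus c a b (t, v)) u + deriv (deriv fun t => expTorus c a b (u, t)) v
      = (-μ) • expTorus c a b (u, v) := by
  simp only [deriv_expTorus_fst, deriv_expTorus_snd]
  ext j
  simp only [expTorus, PiLp.add_apply, PiLp.smul_apply, real_smul, ← hμ j]
  push_cast
  linear_combination (a j ^ 2 + b j ^ 2 : ℂ) * c j * cexp (I * (a j * u + b j * v)) * I_sq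

lemma norm_sq_deriv_expTorus_fst :
    ‖deriv (fun t => expTorus c a b (t, v)) u‖ ^ 2 = ∑ j, a j ^ 2 * ‖c j‖ ^ 2 := by
  simp only [deriv_expTorus_fst, norm_sq_expTorus, norm_mul, norm_I, norm_real, norm_eq_abs, one_mul,
    mul_pow, sq_abs]

lemma norm_sq_deriv_expTorus_snd :
    ‖deriv (fun t => expTorus c a b (u, t)) v‖ ^ 2 = ∑ j, b j ^ 2 * ‖c j‖ ^ 2 := by
  simp only [deriv_expTorus_snd, norm_sq_expTorus, norm_mul, norm_I, norm_real, norm_eq_abs, one_mul,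
    mul_pow, sq_abs]

lemma re_inner_deriv_expTorus :
    re ⟪deriv (fun t => expTorus c a b (t, v)) u, deriv (fun t => expTorus c a b (u, t)) v⟫_ℂ
      = ∑ j, a j * b j * ‖c j‖ ^ 2 := by
  simp only [deriv_expTorus_fst, deriv_expTorus_snd, inner_expTorus, re_sum]
  refine Finset.sum_congr rfl fun j _ => ?_
  have h : conj (I * a j * c j) * (I * b j * c j) = (a j * b j * ‖c j‖ ^ 2 : ℝ) := by
    rw [map_mul, map_mul, conj_I, conj_ofReal]
    push_cast
    linear_combination (a j * b j : ℂ) * conj_mul' (c j) - a j * b j * conj (c j) * c j * I_sq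
  rw [h, ofReal_re]

end expTorus

/-- the explicit torus `f₁` in `S⁵ ⊂ ℂ³` is flat and minimal:
its partial derivatives satisfy `‖f_u‖² = ‖f_v‖² = 2k²/(4k²−1)`,
`Re⟨f_u, f_v⟩ = 0`, and `f_uu + f_vv = −(4k²/(4k²−1))·f₁` (whence, by
Takahashi's theorem, `f₁` is a flat minimal immersion into `S⁵`). -/
theorem flat_torus_minimal
    (k : ℤ) (hk : 2 ≤ k)
    (ω : ℝ) (hω : ω = Real.sqrt (4 * (k : ℝ) ^ 2 - 1))
    (f₁ : ℝ × ℝ → EuclideanSpace ℂ (Fin 3))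
    (hf₁ : ∀ u v : ℝ, f₁ (u, v) = (WithLp.equiv 2 (Fin 3 → ℂ)).symm
      ![(Real.sqrt ((2 * (k : ℝ) ^ 2 - 1) / (4 * (k : ℝ) ^ 2 - 1)) : ℂ) *
          Complex.exp (Complex.I * (2 * (k : ℝ) * v / ω : ℝ)),
        ((k : ℝ) / ω : ℂ) * Complex.exp (Complex.I * ((u - v / ω : ℝ) : ℂ)),
        ((k : ℝ) / ω : ℂ) * Complex.exp (Complex.I * ((u + v / ω : ℝ) : ℂ))]) :
    ∀ u v : ℝ,
      ‖deriv (fun t => f₁ (t, v)) u‖ ^ 2 =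
          2 * (k : ℝ) ^ 2 / (4 * (k : ℝ) ^ 2 - 1) ∧
      ‖deriv (fun t => f₁ (u, t)) v‖ ^ 2 =
          2 * (k : ℝ) ^ 2 / (4 * (k : ℝ) ^ 2 - 1) ∧
      (inner ℂ (deriv (fun t => f₁ (t, v)) u) (deriv (fun t => f₁ (u, t)) v) : ℂ).re
          = 0 ∧
      deriv (deriv (fun t => f₁ (t, v))) u + deriv (deriv (fun t => f₁ (u, t))) v =
        (-(4 * (k : ℝ) ^ 2 / (4 * (k : ℝ) ^ 2 - 1))) • f₁ (u, v) := by
  intro u v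
  have hk1 : (1 : ℝ) ≤ k := by exact_mod_cast hk.trans' one_le_two
  have hω2 : ω ^ 2 = 4 * k ^ 2 - 1 := by rw [hω, sq_sqrt]; nlinarith
  have hω0 : ω ≠ 0 := by rintro rfl; nlinarith
  obtain rfl : f₁ = expTorus ![(Real.sqrt ((2 * k ^ 2 - 1) / (4 * k ^ 2 - 1)) : ℂ),
      ((k : ℝ) / ω : ℂ), ((k : ℝ) / ω : ℂ)] ![0, 1, 1] ![2 * k / ω, -1 / ω, 1 / ω] := by
    funext ⟨u, v⟩
    rw [hf₁]
    ext j
    fin_cases j <;> simp only [expTorus, WithLp.equiv_symm_apply, PiLp.toLp_apply, Fin.zero_eta,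
      Fin.mk_one, Fin.reduceFinMk, Matrix.cons_val, Matrix.cons_val_zero, Matrix.cons_val_one] <;>
      congr 4 <;> ring
  have hA : Real.sqrt ((2 * k ^ 2 - 1) / ω ^ 2) ^ 2 = (2 * k ^ 2 - 1) / ω ^ 2 :=
    sq_sqrt (div_nonneg (by nlinarith) (sq_nonneg ω))
  have hfreq : ∀ j, ![(0 : ℝ), 1, 1] j ^ 2 + ![2 * k / ω, -1 / ω, 1 / ω] j ^ 2
      = 4 * k ^ 2 / (4 * k ^ 2 - 1) := by
    intro j
    fin_cases j <;>
      simp only [Fin.zero_eta, Fin.mk_one, Fin.reduceFinMk, Matrix.cons_val_zero, Matrix.cons_val_one,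
        Matrix.cons_val, ← hω2] <;>
      field_simp <;> linarith
  rw [norm_sq_deriv_expTorus_fst, norm_sq_deriv_expTorus_snd, re_inner_deriv_expTorus,
    laplacian_expTorus _ _ _ _ _ hfreq]
  simp only [Fin.sum_univ_three, Matrix.cons_val_zero, Matrix.cons_val_one, Matrix.cons_val,
    Complex.norm_div, norm_real, norm_eq_abs, div_pow, sq_abs, ← hω2, hA]
  refine ⟨by ring, by field_simp; linarith, by ring, trivial⟩
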